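/- arXiv:2310.09860 — 7 statements merged into one kernel-verified Lean document; each statement's English description precedes it below -/
import Mathlib

section
/- Let ∼ be a graph relation on ℕ satisfying the Rado extension property: for all finite disjoint sets K, L ⊆ ℕ there are infinitely many v ∉ K ∪ L with v ∼ k for all k ∈ K and ¬(v ∼ h) for all h ∈ L. Define m → n iff (m < n and m ∼ n) or (m > n and ¬(m ∼ n)). Then the tournament ⟨ℕ, →⟩ satisfies the random-tournament extension property: for every pair of finite sets K ⊆ H ⊆ ℕ there exists v ∉ H with k → v for all k ∈ K and v → h for all h ∈ H \ K. -/
/-- If a graph `∼` on ℕ has the Rado extension property, then the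
derived tournament `m → n iff (m < n ∧ m ∼ n) ∨ (m > n ∧ ¬ m ∼ n)` has the
random-tournament extension property. -/
theorem derived_tournament_extension_property
    (adj : ℕ → ℕ → Prop)
    (hsymm : ∀ m n, adj m n → adj n m)
    (hirr : ∀ m, ¬ adj m m)
    (hrado : ∀ K L : Finset ℕ, Disjoint K L →
      {v | v ∉ K ∧ v ∉ L ∧ (∀ k ∈ K, adj v k) ∧ (∀ h ∈ L, ¬ adj v h)}.Infinite) :
    let arrow : ℕ → ℕ → Prop := fun m n => (m < n ∧ adj m n) ∨ (n < m ∧ ¬ adj m n)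
    ∀ K H : Finset ℕ, K ⊆ H →
      ∃ v, v ∉ H ∧ (∀ k ∈ K, arrow k v) ∧ (∀ h ∈ H, h ∉ K → arrow v h) := by
  intro arrow K H hKH
  have hdisj : Disjoint K (H \ K) := Finset.disjoint_sdiff
  have hinf := hrado K (H \ K) hdisj
  obtain ⟨v, hv, hvgt⟩ := hinf.exists_gt ((H.sup id))
  obtain ⟨hvK, hvL, hadjK, hadjL⟩ := hv
  have hgt : ∀ h ∈ H, h < v := fun h hh =>
    lt_of_le_of_lt (Finset.le_sup (f := id) hh) hvgt
  refine ⟨v, ?_, ?_, ?_⟩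
  · intro hvH
    exact lt_irrefl v (hgt v hvH)
  · intro k hk
    exact Or.inl ⟨hgt k (hKH hk), hsymm _ _ (hadjK k hk)⟩
  · intro h hh hhK
    exact Or.inr ⟨hgt h hh, hadjL h (Finset.mem_sdiff.mpr ⟨hh, hhK⟩)⟩
end

section
/- Let ∼ be a graph relation on ℕ with the Rado extension property, and define the tournament m → n iff (m < n and m ∼ n) or (m > n and ¬(m ∼ n)). Then for every subset A ⊆ ℕ: the induced graph ⟨A, ∼⟩ satisfies the Rado extension property (within A) if and only if the induced tournament ⟨A, →⟩ satisfies the random-tournament extension property (within A). Consequently, the set of copies of the Rado graph inside ⟨ℕ, ∼⟩ equals the set of copies of the random tournament inside ⟨ℕ, →⟩. -/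
/-- The Rado extension property within a subset `A` of the graph `⟨ℕ, adj⟩`. -/
def RadoWithin (adj : ℕ → ℕ → Prop) (A : Set ℕ) : Prop :=
  ∀ K H : Finset ℕ, K ⊆ H → ↑H ⊆ A →
    ∃ v ∈ A, v ∉ H ∧ (∀ k ∈ K, adj v k) ∧ (∀ h ∈ H, h ∉ K → ¬ adj v h)

/-- The random-tournament extension property within a subset `A` of `⟨ℕ, arrow⟩`. -/
def RandTournWithin (arrow : ℕ → ℕ → Prop) (A : Set ℕ) : Prop :=
  ∀ K H : Finset ℕ, K ⊆ H → ↑H ⊆ A →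
    ∃ v ∈ A, v ∉ H ∧ (∀ k ∈ K, arrow k v) ∧ (∀ h ∈ H, h ∉ K → arrow v h)

/-- For a Rado graph `⟨ℕ, adj⟩` and the derived random tournament,
a subset is a copy of the Rado graph iff it is a copy of the random tournament;
hence the sets of copies coincide. -/
theorem copies_of_rado_eq_copies_of_random_tournament
    (adj : ℕ → ℕ → Prop)
    (hsymm : ∀ m n, adj m n → adj n m)
    (hirr : ∀ m, ¬ adj m m)
    (hrado : RadoWithin adj Set.univ) :
    let arrow : ℕ → ℕ → Prop := fun m n => (m < n ∧ adj m n) ∨ (n < m ∧ ¬ adj m n)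
    (∀ A : Set ℕ, RadoWithin adj A ↔ RandTournWithin arrow A) ∧
    {A : Set ℕ | RadoWithin adj A} = {A : Set ℕ | RandTournWithin arrow A} := by
  intro arrow
  have main : ∀ A : Set ℕ, RadoWithin adj A ↔ RandTournWithin arrow A := by
    intro A
    constructor
    · intro hA K H hKH hHA
      set M := H.sup id with hM
      have hfin : (A ∩ Set.Iic M).Finite := (Set.finite_Iic M).inter_of_right A
      set H' := H ∪ hfin.toFinset with hH'
      have hKH' : K ⊆ H' := hKH.trans Finset.subset_union_left
      have hH'A : ↑H' ⊆ A := by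
        intro x hx
        simp only [hH', Finset.coe_union, Set.mem_union, Finset.mem_coe,
          Set.Finite.coe_toFinset] at hx
        rcases hx with hx | hx
        · exact hHA hx
        · exact hx.1
      obtain ⟨v, hvA, hvH', hadjK, hnadj⟩ := hA K H' hKH' hH'A
      have hvM : ∀ h ∈ H, h < v := by
        intro h hh
        have hle : h ≤ M := Finset.le_sup (f := id) hh
        by_contra hlt
        push_neg at hlt
        exact hvH' (Finset.mem_union_right _ (hfin.mem_toFinset.mpr ⟨hvA, hlt.trans hle⟩))
      refine ⟨v, hvA, fun hv => hvH' (Finset.mem_union_left _ hv), ?_, ?_⟩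
      · intro k hk
        exact Or.inl ⟨hvM k (hKH hk), hsymm v k (hadjK k hk)⟩
      · intro h hh hhK
        exact Or.inr ⟨hvM h hh, hnadj h (Finset.mem_union_left _ hh) hhK⟩
    · intro hA K H hKH hHA
      set M := H.sup id with hM
      have hfin : (A ∩ Set.Iic M).Finite := (Set.finite_Iic M).inter_of_right A
      set H' := H ∪ hfin.toFinset with hH'
      have hKH' : K ⊆ H' := hKH.trans Finset.subset_union_left
      have hH'A : ↑H' ⊆ A := by
        intro x hx
        simp only [hH', Finset.coe_union, Set.mem_union, Finset.mem_coe,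
          Set.Finite.coe_toFinset] at hx
        rcases hx with hx | hx
        · exact hHA hx
        · exact hx.1
      obtain ⟨v, hvA, hvH', harrK, harrH⟩ := hA K H' hKH' hH'A
      have hvM : ∀ h ∈ H, h < v := by
        intro h hh
        have hle : h ≤ M := Finset.le_sup (f := id) hh
        by_contra hlt
        push_neg at hlt
        exact hvH' (Finset.mem_union_right _ (hfin.mem_toFinset.mpr ⟨hvA, hlt.trans hle⟩))
      refine ⟨v, hvA, fun hv => hvH' (Finset.mem_union_left _ hv), ?_, ?_⟩
      · intro k hk
        rcases harrK k hk with ⟨_, h⟩ | ⟨hlt, _⟩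
        · exact hsymm k v h
        · exact absurd hlt (lt_asymm (hvM k (hKH hk)))
      · intro h hh hhK
        rcases harrH h (Finset.mem_union_left _ hh) hhK with ⟨hlt, _⟩ | ⟨_, hn⟩
        · exact absurd hlt (lt_asymm (hvM h hh))
        · exact hn
  exact ⟨main, Set.ext fun A => main A⟩
end

section
/- Let S = { e^{qi} : q ∈ ℚ } ⊆ ℂ be the set of points on the unit circle with rational angle, with the relation e^{q₁i} → e^{q₂i} iff q₂ − q₁ ∈ ⋃_{k∈ℤ} (2kπ, 2kπ + π). Then ⟨S, →⟩ is a tournament: → is irreflexive, and for any two distinct points exactly one of x → y, y → x holds. -/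
/-- Points of the unit circle with rational angle. -/
def Scirc : Set ℂ := {z | ∃ q : ℚ, z = Complex.exp (q * Complex.I)}

/-- The dense local order relation: `e^{q₁i} → e^{q₂i}` iff
`q₂ - q₁ ∈ ⋃_{k∈ℤ} (2kπ, 2kπ + π)`. -/
def Arrow2 (x y : ℂ) : Prop :=
  ∃ q₁ q₂ : ℚ, x = Complex.exp (q₁ * Complex.I) ∧ y = Complex.exp (q₂ * Complex.I) ∧
    ∃ k : ℤ, 2 * (k : ℝ) * Real.pi < (q₂ : ℝ) - (q₁ : ℝ) ∧
      (q₂ : ℝ) - (q₁ : ℝ) < 2 * (k : ℝ) * Real.pi + Real.pi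

lemma rat_eq_int_mul_pi {q : ℚ} {m : ℤ} (h : (q:ℝ) = m * Real.pi) : m = 0 := by
  by_contra hm
  have hm' : (m:ℝ) ≠ 0 := Int.cast_ne_zero.mpr hm
  apply irrational_pi.ne_rat (q / m)
  push_cast
  field_simp
  linarith [h]

lemma exp_rat_inj {a b : ℚ} (h : Complex.exp (a * Complex.I) = Complex.exp (b * Complex.I)) :
    a = b := by
  rw [Complex.exp_eq_exp_iff_exists_int] at h
  obtain ⟨n, hn⟩ := h
  have h2 : (a:ℂ) * Complex.I = ((b:ℂ) + n * (2 * Real.pi)) * Complex.I := by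
    rw [hn]; ring
  have h3 : (a:ℂ) = (b:ℂ) + n * (2 * Real.pi) := mul_right_cancel₀ Complex.I_ne_zero h2
  have h4 : (a:ℝ) = (b:ℝ) + n * (2 * Real.pi) := by exact_mod_cast h3
  have hab : ((a - b : ℚ) : ℝ) = (2*n : ℤ) * Real.pi := by push_cast; linarith
  have := rat_eq_int_mul_pi hab
  have hn0 : n = 0 := by omega
  subst hn0
  have : (a:ℝ) = b := by simpa using h4
  exact_mod_cast this

lemma not_both {a b : ℚ} (h1 : ∃ k : ℤ, 2 * (k : ℝ) * Real.pi < (b : ℝ) - (a : ℝ) ∧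
      (b : ℝ) - (a : ℝ) < 2 * (k : ℝ) * Real.pi + Real.pi)
    (h2 : ∃ k : ℤ, 2 * (k : ℝ) * Real.pi < (a : ℝ) - (b : ℝ) ∧
      (a : ℝ) - (b : ℝ) < 2 * (k : ℝ) * Real.pi + Real.pi) : False := by
  obtain ⟨k, hk1, hk2⟩ := h1
  obtain ⟨m, hm1, hm2⟩ := h2
  have hpi := Real.pi_pos
  rcases le_or_gt 0 (k + m) with h | h
  · have : (0:ℝ) ≤ (k:ℝ) + m := by exact_mod_cast h
    nlinarith
  · have h' : ((k + m : ℤ):ℝ) ≤ ((-1 : ℤ):ℝ) := Int.cast_le.mpr (by omega)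
    push_cast at h'
    nlinarith

/-- `⟨S, →⟩` is a tournament: `→` is irreflexive and for any two
distinct points of `S` exactly one of `x → y`, `y → x` holds. -/
theorem denseLocalOrder_is_tournament :
    (∀ x ∈ Scirc, ¬ Arrow2 x x) ∧
    (∀ x ∈ Scirc, ∀ y ∈ Scirc, x ≠ y →
      (Arrow2 x y ∨ Arrow2 y x) ∧ ¬ (Arrow2 x y ∧ Arrow2 y x)) := by
  constructor
  · rintro x ⟨q, rfl⟩ ⟨q₁, q₂, h1, h2, hk⟩
    have e1 : q = q₁ := exp_rat_inj h1
    have e2 : q = q₂ := exp_rat_inj h2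
    obtain rfl : q₁ = q₂ := e1.symm.trans e2
    exact not_both hk hk
  · rintro x hx y hy hne
    obtain ⟨q₁, rfl⟩ := hx
    obtain ⟨q₂, rfl⟩ := hy
    have hq : q₁ ≠ q₂ := fun h => hne (by rw [h])
    constructor
    · -- totality
      have hpi := Real.pi_pos
      set d : ℝ := (q₂ : ℝ) - (q₁ : ℝ) with hd
      set k : ℤ := ⌊d / (2 * Real.pi)⌋ with hkdef
      have hl : (k:ℝ) ≤ d / (2 * Real.pi) := Int.floor_le _
      have hr : d / (2 * Real.pi) < k + 1 := Int.lt_floor_add_one _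
      have h2pi : (0:ℝ) < 2 * Real.pi := by linarith
      have hl2 : 2 * (k:ℝ) * Real.pi ≤ d := by nlinarith [(le_div_iff₀ h2pi).mp hl]
      have hr2 : d < 2 * (k:ℝ) * Real.pi + 2 * Real.pi := by
        nlinarith [(div_lt_iff₀ h2pi).mp hr]
      have hne0 : d ≠ 2 * (k:ℝ) * Real.pi := by
        intro h
        have : ((q₂ - q₁ : ℚ) : ℝ) = ((2*k : ℤ) : ℝ) * Real.pi := by push_cast; linarith
        have h0 := rat_eq_int_mul_pi this
        have hk0 : k = 0 := by omega
        apply hq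
        have h5 : (q₁:ℝ) = q₂ := by rw [hk0] at h; push_cast at h; linarith
        exact_mod_cast h5
      have hnemid : d ≠ 2 * (k:ℝ) * Real.pi + Real.pi := by
        intro h
        have : ((q₂ - q₁ : ℚ) : ℝ) = ((2*k + 1 : ℤ) : ℝ) * Real.pi := by push_cast; linarith
        have h0 := rat_eq_int_mul_pi this
        omega
      have hl3 : 2 * (k:ℝ) * Real.pi < d := lt_of_le_of_ne hl2 (Ne.symm hne0)
      rcases lt_or_gt_of_ne hnemid with hcase | hcase
      · exact Or.inl ⟨q₁, q₂, rfl, rfl, k, hl3, hcase⟩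
      · refine Or.inr ⟨q₂, q₁, rfl, rfl, -(k+1), ?_, ?_⟩
        · push_cast; linarith
        · push_cast; linarith
    · rintro ⟨⟨a₁, a₂, ha1, ha2, hka⟩, ⟨b₁, b₂, hb1, hb2, hkb⟩⟩
      have e1 : q₁ = a₁ := exp_rat_inj ha1
      have e2 : q₂ = a₂ := exp_rat_inj ha2
      have e3 : q₂ = b₁ := exp_rat_inj hb1
      have e4 : q₁ = b₂ := exp_rat_inj hb2
      subst e1; subst e2
      rw [← e3, ← e4] at hkb
      exact not_both hka hkb
end

section
/- Let S(2) = ⟨S, →⟩ be the dense local order with partition {A, B} and linear order ρ. If D ⊆ S is an elementary substructure of S(2), then ⟨D, ρ ↾ D⟩ has at most one endpoint (it cannot have both a minimum and a maximum). -/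
/-- The left half-circle: points with angle in `⋃_k (π/2 + 2kπ, 3π/2 + 2kπ)`. -/
def PartA : Set ℂ :=
  {z | ∃ q : ℚ, z = Complex.exp (q * Complex.I) ∧
    ∃ k : ℤ, Real.pi / 2 + 2 * (k : ℝ) * Real.pi < (q : ℝ) ∧
      (q : ℝ) < 3 * Real.pi / 2 + 2 * (k : ℝ) * Real.pi}

/-- The right half-circle. -/
def PartB : Set ℂ := Scirc \ PartA

/-- The linear order `ρ`: agrees with `→` inside each part and with `→⁻¹`
across the two parts. -/
def Rho (x y : ℂ) : Prop :=
  (((x ∈ PartA ∧ y ∈ PartA) ∨ (x ∈ PartB ∧ y ∈ PartB)) ∧ Arrow2 x y) ∨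
  (((x ∈ PartA ∧ y ∈ PartB) ∨ (x ∈ PartB ∧ y ∈ PartA)) ∧ Arrow2 y x)

attribute [local instance] Classical.propDecidable

/-- Satisfaction of a quantifier-free formula in the three variables `u, v, w`
of the language `{R}`, coded by a Boolean function of the nine atoms. -/
noncomputable def QFSat (θ : (Fin 3 → Fin 3 → Bool) → Bool) (x y z : ℂ) : Prop :=
  θ (fun i j => decide (Arrow2 (![x, y, z] i) (![x, y, z] j))) = true

/-- The Tarski–Vaught consequence of `⟨D, →↾D⟩ ≺ S(2)`. -/
def TarskiVaught2 (D : Set ℂ) : Prop :=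
  ∀ (θ : (Fin 3 → Fin 3 → Bool) → Bool), ∀ x ∈ D, ∀ y ∈ D,
    (∃ s ∈ Scirc, QFSat θ x y s) → ∃ z ∈ D, QFSat θ x y z

/-!
On the rational points of the circle, `x → y` says `0 < Im (conj x * y)`, the part `A` is the
half `Re z < 0`, and `ρ` turns out to be the order by the slope `Im z / Re z` of the line through
`0` and `z`. The quantifier-free formula "`u → w` or `w → u` according as `u ∈ A` or not, and the
same for `v`" holds of `(x, y, w)` exactly when `w ∈ A` lies `ρ`-above both `x` and `y`, or
`w ∈ B` lies `ρ`-below both. A rational point of `A` of steep enough slope satisfies it in `S`,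
so by Tarski–Vaught some `z ∈ D` does, and such a `z` is either above the `ρ`-maximum or below
the `ρ`-minimum of `D`.
-/

open Real

lemma Real.sin_pos_iff_exists_int {t : ℝ} :
    0 < sin t ↔ ∃ k : ℤ, 2 * k * π < t ∧ t < 2 * k * π + π := by
  constructor
  · intro h
    set u := toIcoMod two_pi_pos (-π) t
    obtain ⟨hu₁, hu₂⟩ := toIcoMod_mem_Ico two_pi_pos (-π) t
    have ht : t = u + toIcoDiv two_pi_pos (-π) t * (2 * π) := by
      rw [← zsmul_eq_mul, ← self_sub_toIcoMod]
      ring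
    have hu₀ : 0 < u := by
      by_contra! hu
      rw [ht, sin_add_int_mul_two_pi] at h
      exact (sin_nonpos_of_nonpos_of_neg_pi_le hu hu₁).not_gt h
    exact ⟨toIcoDiv two_pi_pos (-π) t, by linarith, by linarith⟩
  · rintro ⟨k, h₁, h₂⟩
    rw [← sin_sub_int_mul_two_pi t k]
    exact sin_pos_of_pos_of_lt_pi (by linarith) (by linarith)

lemma eq_zero_of_ratCast_eq_intCast_mul_pi {q : ℚ} {n : ℤ} (h : (q : ℝ) = n * π) : n = 0 := by
  by_contra hn
  exact irrational_pi.intCast_mul hn ⟨q, h⟩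

namespace Complex

lemma exp_ratCast_mul_I_injective : Function.Injective fun q : ℚ => exp (q * I) := by
  intro q q' h
  obtain ⟨n, hn⟩ := exp_eq_exp_iff_exists_int.1 h
  have him : (q : ℝ) = q' + n * (2 * π) := by simpa using congrArg im hn
  have hn₀ : 2 * n = 0 :=
    eq_zero_of_ratCast_eq_intCast_mul_pi (q := q - q') (by push_cast; linarith)
  have : (q : ℝ) = q' := by rw [him, show n = 0 by omega]; simp
  exact_mod_cast this

lemma exp_ratCast_mul_I_re (q : ℚ) : (exp (q * I)).re = Real.cos q := by
  rw [← ofReal_ratCast, exp_ofReal_mul_I_re]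

lemma exp_ratCast_mul_I_im (q : ℚ) : (exp (q * I)).im = Real.sin q := by
  rw [← ofReal_ratCast, exp_ofReal_mul_I_im]

end Complex

open Complex (exp_ratCast_mul_I_injective exp_ratCast_mul_I_re exp_ratCast_mul_I_im)

lemma arrow2_iff {z w : ℂ} (hz : z ∈ Scirc) (hw : w ∈ Scirc) :
    Arrow2 z w ↔ 0 < z.re * w.im - z.im * w.re := by
  obtain ⟨q₁, rfl⟩ := hz
  obtain ⟨q₂, rfl⟩ := hw
  rw [exp_ratCast_mul_I_re, exp_ratCast_mul_I_re, exp_ratCast_mul_I_im, exp_ratCast_mul_I_im,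
    show cos q₁ * sin q₂ - sin q₁ * cos q₂ = sin (q₂ - q₁) by rw [sin_sub]; ring,
    sin_pos_iff_exists_int]
  constructor
  · rintro ⟨p₁, p₂, h₁, h₂, hk⟩
    obtain rfl := exp_ratCast_mul_I_injective h₁
    obtain rfl := exp_ratCast_mul_I_injective h₂
    exact hk
  · exact fun hk => ⟨q₁, q₂, rfl, rfl, hk⟩

lemma mem_partA_iff_re_neg {z : ℂ} (hz : z ∈ Scirc) : z ∈ PartA ↔ z.re < 0 := by
  obtain ⟨q, rfl⟩ := hz
  rw [exp_ratCast_mul_I_re, ← neg_pos, ← sin_sub_pi_div_two, sin_pos_iff_exists_int]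
  constructor
  · rintro ⟨q', hq', k, h₁, h₂⟩
    obtain rfl := exp_ratCast_mul_I_injective hq'
    exact ⟨k, by linarith, by linarith⟩
  · rintro ⟨k, h₁, h₂⟩
    exact ⟨q, rfl, k, by linarith, by linarith⟩

lemma re_ne_zero_of_mem_scirc {z : ℂ} (hz : z ∈ Scirc) : z.re ≠ 0 := by
  obtain ⟨q, rfl⟩ := hz
  rw [exp_ratCast_mul_I_re]
  intro h
  obtain ⟨k, hk⟩ := Real.cos_eq_zero_iff.1 h
  have := eq_zero_of_ratCast_eq_intCast_mul_pi (q := 2 * q) (n := 2 * k + 1) (by push_cast; linarith)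
  omega

lemma mem_partB_iff_re_pos {z : ℂ} (hz : z ∈ Scirc) : z ∈ PartB ↔ 0 < z.re := by
  rw [PartB, Set.mem_sdiff, mem_partA_iff_re_neg hz, not_lt,
    (re_ne_zero_of_mem_scirc hz).symm.le_iff_lt]
  exact and_iff_right hz

noncomputable def lineSlope (z : ℂ) : ℝ := z.im / z.re

lemma lineSlope_lt_lineSlope_iff {z w : ℂ} (hz : z.re ≠ 0) (hw : w.re ≠ 0) :
    lineSlope z < lineSlope w ↔ 0 < z.re * w.re * (z.re * w.im - z.im * w.re) := by
  have hzw : z.re * w.re ≠ 0 := mul_ne_zero hz hw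
  have : lineSlope w - lineSlope z =
      z.re * w.re * (z.re * w.im - z.im * w.re) / (z.re * w.re) ^ 2 := by
    unfold lineSlope
    field_simp
  rw [← sub_pos, this, div_pos_iff_of_pos_right (by positivity)]

lemma rho_iff_lineSlope_lt {z w : ℂ} (hz : z ∈ Scirc) (hw : w ∈ Scirc) :
    Rho z w ↔ lineSlope z < lineSlope w := by
  rw [lineSlope_lt_lineSlope_iff (re_ne_zero_of_mem_scirc hz) (re_ne_zero_of_mem_scirc hw), Rho,
    mem_partA_iff_re_neg hz, mem_partA_iff_re_neg hw, mem_partB_iff_re_pos hz,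
    mem_partB_iff_re_pos hw, arrow2_iff hz hw, arrow2_iff hw hz,
    show w.re * z.im - w.im * z.re = -(z.re * w.im - z.im * w.re) by ring, neg_pos,
    mul_pos_iff, mul_pos_iff, mul_neg_iff]
  tauto

lemma exists_mem_partA_lt_lineSlope (M : ℝ) : ∃ s ∈ Scirc, s ∈ PartA ∧ M < lineSlope s := by
  have hM₁ := neg_pi_div_two_lt_arctan M
  have hM₂ := arctan_lt_pi_div_two M
  obtain ⟨t, ht₁, ht₂⟩ := exists_rat_btwn (show arctan M + π < 3 * π / 2 by linarith)
  refine ⟨_, ⟨t, rfl⟩, ⟨t, rfl, 0, by simp; linarith, by simp; linarith⟩, ?_⟩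
  rw [lineSlope, exp_ratCast_mul_I_re, exp_ratCast_mul_I_im, ← tan_eq_sin_div_cos,
    ← tan_periodic.sub_eq]
  calc M = tan (arctan M) := (tan_arctan M).symm
    _ < tan (t - π) := strictMonoOn_tan ⟨hM₁, hM₂⟩ ⟨by linarith, by linarith⟩ (by linarith)

lemma ite_arrow2_iff {x w : ℂ} (hx : x ∈ Scirc) (hw : w ∈ Scirc) :
    (if x ∈ PartA then Arrow2 x w else Arrow2 w x) ↔
      (w.re < 0 ∧ lineSlope x < lineSlope w) ∨ (0 < w.re ∧ lineSlope w < lineSlope x) := by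
  have hxB : x ∈ PartB ↔ x ∉ PartA := and_iff_right hx
  have hwB : w ∈ PartB ↔ w ∉ PartA := and_iff_right hw
  rw [← rho_iff_lineSlope_lt hx hw, ← rho_iff_lineSlope_lt hw hx, ← mem_partA_iff_re_neg hw,
    ← mem_partB_iff_re_pos hw, Rho, Rho, hxB, hwB]
  by_cases hxA : x ∈ PartA <;> by_cases hwA : w ∈ PartA <;> simp [hxA, hwA]

noncomputable def beyondBoth (x y : ℂ) (m : Fin 3 → Fin 3 → Bool) : Bool :=
  (if x ∈ PartA then m 0 2 else m 2 0) && (if y ∈ PartA then m 1 2 else m 2 1)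

lemma qfSat_beyondBoth_iff (x y w : ℂ) :
    QFSat (beyondBoth x y) x y w ↔
      (if x ∈ PartA then Arrow2 x w else Arrow2 w x) ∧
        (if y ∈ PartA then Arrow2 y w else Arrow2 w y) := by
  unfold QFSat beyondBoth
  split_ifs <;> simp only [Bool.and_eq_true, decide_eq_true_iff] <;> rfl

/-- If `D` is (the domain of) an elementary substructure of
`S(2)`, then `⟨D, ρ↾D⟩` cannot have both a minimum and a maximum. -/
theorem elementary_substructure_at_most_one_endpoint
    (D : Set ℂ) (hDS : D ⊆ Scirc) (hTV : TarskiVaught2 D) :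
    ¬ ((∃ x ∈ D, ∀ z ∈ D, z ≠ x → Rho x z) ∧
       (∃ y ∈ D, ∀ z ∈ D, z ≠ y → Rho z y)) := by
  rintro ⟨⟨x, hxD, hxmin⟩, y, hyD, hymax⟩
  have hx := hDS hxD
  have hy := hDS hyD
  obtain ⟨s, hs, hsA, hxys⟩ := exists_mem_partA_lt_lineSlope (max (lineSlope x) (lineSlope y))
  rw [max_lt_iff] at hxys
  obtain ⟨z, hzD, hzθ⟩ := hTV (beyondBoth x y) x hxD y hyD ⟨s, hs, by
    rw [qfSat_beyondBoth_iff, ite_arrow2_iff hx hs, ite_arrow2_iff hy hs, ← mem_partA_iff_re_neg hs]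
    exact ⟨.inl ⟨hsA, hxys.1⟩, .inl ⟨hsA, hxys.2⟩⟩⟩
  have hz := hDS hzD
  rw [qfSat_beyondBoth_iff, ite_arrow2_iff hx hz, ite_arrow2_iff hy hz] at hzθ
  obtain ⟨hxz, hyz⟩ := hzθ
  rcases hyz with ⟨-, hyz⟩ | ⟨hzB, -⟩
  · have hzy := (rho_iff_lineSlope_lt hz hy).1 (hymax z hzD (by rintro rfl; exact lt_irrefl _ hyz))
    exact lt_asymm hyz hzy
  rcases hxz with ⟨hzA, -⟩ | ⟨-, hzx⟩
  · exact lt_asymm hzA hzB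
  · have hxz := (rho_iff_lineSlope_lt hx hz).1 (hxmin z hzD (by rintro rfl; exact lt_irrefl _ hzx))
    exact lt_asymm hzx hxz
end

section
/- Every copy of ℚ₂ (the rational line with a partition into two dense sets) inside the dense local order S(2), via the definable linear order ρ, is a copy of S(2): if D ⊆ S and ⟨D, ρ ↾ D, A ∩ D, B ∩ D⟩ ≅ ⟨S, ρ, A, B⟩, then ⟨D, → ↾ D⟩ ≅ ⟨S, →⟩. -/
/-- For points of `Scirc`, membership in `PartB` is just non-membership in `PartA`. -/
lemma memB_iff {x : ℂ} (hx : x ∈ Scirc) : x ∈ PartB ↔ x ∉ PartA := by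
  simp [PartB, hx]

/-- `Arrow2` is (quantifier-freely) definable from `Rho` and the parts. -/
lemma arrow_iff {x y : ℂ} (hx : x ∈ Scirc) (hy : y ∈ Scirc) :
    Arrow2 x y ↔
      (((x ∈ PartA ↔ y ∈ PartA) ∧ Rho x y) ∨ (¬(x ∈ PartA ↔ y ∈ PartA) ∧ Rho y x)) := by
  have hxB := memB_iff hx
  have hyB := memB_iff hy
  unfold Rho
  by_cases hA : x ∈ PartA <;> by_cases hA' : y ∈ PartA <;> tauto

/-- if `D ⊆ S` and `⟨D, ρ↾D, A∩D, B∩D⟩ ≅ ⟨S, ρ, A, B⟩`, then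
`⟨D, →↾D⟩ ≅ ⟨S, →⟩`, i.e. every copy of `ℚ₂` inside `S(2)` (via `ρ`) is a copy
of `S(2)`. -/
theorem copy_of_Q2_is_copy_of_S2
    (D : Set ℂ) (hDS : D ⊆ Scirc)
    (h : ∃ F : ℂ → ℂ, Set.BijOn F Scirc D ∧
      (∀ x ∈ Scirc, ∀ y ∈ Scirc, Rho x y ↔ Rho (F x) (F y)) ∧
      (∀ x ∈ Scirc, (x ∈ PartA ↔ F x ∈ PartA)) ∧
      (∀ x ∈ Scirc, (x ∈ PartB ↔ F x ∈ PartB))) :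
    ∃ G : ℂ → ℂ, Set.BijOn G Scirc D ∧
      ∀ x ∈ Scirc, ∀ y ∈ Scirc, Arrow2 x y ↔ Arrow2 (G x) (G y) := by
  obtain ⟨F, hbij, hrho, hA, _⟩ := h
  refine ⟨F, hbij, fun x hx y hy => ?_⟩
  have hFx : F x ∈ Scirc := hDS (hbij.mapsTo hx)
  have hFy : F y ∈ Scirc := hDS (hbij.mapsTo hy)
  rw [arrow_iff hx hy, arrow_iff hFx hFy]
  have h1 := hrho x hx y hy
  have h2 := hrho y hy x hx
  have h3 := hA x hx
  have h4 := hA y hy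
  tauto
end

section
/- Let T be a countable digraph and let T[I_n] be the wreath product obtained by replacing each vertex t of T by an n-element independent set I_n^t (vertices in the same block are unrelated; across blocks, all arrows follow the T-arrow between the blocks). Then every self-embedding of T[I_n] preserves the 'same block' equivalence relation, and the poset of copies P(T[I_n]) = { ⋃_{t ∈ A} I_n^t : A ∈ P(T) } is order-isomorphic to P(T). -/
/-- `Y` is the underlying set of a copy of the structure `⟨α, r⟩` inside itself:
there is a bijection of `α` onto `Y` preserving the relation (an embedding with
image `Y`). -/
def IsCopy {α : Type*} (r : α → α → Prop) (Y : Set α) : Prop :=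
  ∃ f : α → α, Set.BijOn f Set.univ Y ∧ ∀ x y, r x y ↔ r (f x) (f y)

/-- The wreath product `T[I_n]`: each vertex `t` of `T` is replaced by the
`n`-element independent block `{t} × Fin n`; arrows follow the `T`-arrow
between blocks, and vertices in the same block are unrelated. -/
def WrArrow {T : Type*} (r : T → T → Prop) (n : ℕ) (x y : T × Fin n) : Prop :=
  r x.1 y.1

/-- for a tournament `T` and `n ≥ 2`, every self-embedding of
`T[I_n]` preserves the same-block relation, the copies of `T[I_n]` are exactly
the unions of blocks over copies of `T`, and `P(T[I_n]) ≅ P(T)`. -/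
theorem wreath_copies
    {T : Type*} (r : T → T → Prop) (n : ℕ) (hn : 2 ≤ n)
    (hirr : ∀ x, ¬ r x x)
    (hasym : ∀ x y, r x y → ¬ r y x)
    (htot : ∀ x y, x ≠ y → r x y ∨ r y x) :
    (∀ f : T × Fin n → T × Fin n, Function.Injective f →
      (∀ x y, WrArrow r n x y ↔ WrArrow r n (f x) (f y)) →
      ∀ x y, x.1 = y.1 ↔ (f x).1 = (f y).1) ∧
    ({Y : Set (T × Fin n) | IsCopy (WrArrow r n) Y} =
      {Y : Set (T × Fin n) | ∃ A : Set T, IsCopy r A ∧ Y = {p | p.1 ∈ A}}) ∧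
    Nonempty ({A : Set T // IsCopy r A} ≃o
      {Y : Set (T × Fin n) // IsCopy (WrArrow r n) Y}) := by
  have hpos : 0 < n := lt_of_lt_of_le two_pos hn
  let z : Fin n := ⟨0, hpos⟩
  -- equality in T characterized by non-relatedness
  have keyT : ∀ a b : T, a = b ↔ (¬ r a b ∧ ¬ r b a) := by
    intro a b
    constructor
    · rintro rfl; exact ⟨hirr a, hirr a⟩
    · rintro ⟨h1, h2⟩
      by_contra h
      rcases htot a b h with h' | h'
      · exact h1 h'
      · exact h2 h'
  -- block preservation (doesn't even need injectivity)
  have blockPres : ∀ f : T × Fin n → T × Fin n,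
      (∀ x y, WrArrow r n x y ↔ WrArrow r n (f x) (f y)) →
      ∀ x y : T × Fin n, x.1 = y.1 ↔ (f x).1 = (f y).1 := by
    intro f hf x y
    rw [keyT x.1 y.1, keyT (f x).1 (f y).1]
    exact and_congr (not_congr (hf x y)) (not_congr (hf y x))
  -- image of a full-block set under fst
  have img : ∀ A : Set T, Prod.fst '' {p : T × Fin n | p.1 ∈ A} = A := by
    intro A
    ext a
    constructor
    · rintro ⟨p, hp, rfl⟩; exact hp
    · intro ha; exact ⟨(a, z), ha, rfl⟩
  -- backward direction: blocks over a copy of T form a copy of T[I_n]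
  have bwd : ∀ A : Set T, IsCopy r A →
      IsCopy (WrArrow r n) {p : T × Fin n | p.1 ∈ A} := by
    rintro A ⟨g, hgbij, hg⟩
    have hginj : Function.Injective g := fun a b h =>
      hgbij.injOn (Set.mem_univ a) (Set.mem_univ b) h
    refine ⟨fun p => (g p.1, p.2), ⟨?_, ?_, ?_⟩, ?_⟩
    · intro p _
      exact hgbij.mapsTo (Set.mem_univ p.1)
    · intro p _ q _ h
      have h' : (g p.1, p.2) = (g q.1, q.2) := h
      rw [Prod.mk.injEq] at h'
      exact Prod.ext (hginj h'.1) h'.2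
    · intro q hq
      obtain ⟨t, -, ht⟩ := hgbij.surjOn hq
      exact ⟨(t, q.2), Set.mem_univ _, Prod.ext ht rfl⟩
    · intro x y
      exact hg x.1 y.1
  -- forward direction
  have fwd : ∀ Y : Set (T × Fin n), IsCopy (WrArrow r n) Y →
      ∃ A : Set T, IsCopy r A ∧ Y = {p : T × Fin n | p.1 ∈ A} := by
    rintro Y ⟨f, hbij, hf⟩
    have finj : Function.Injective f := fun a b h =>
      hbij.injOn (Set.mem_univ a) (Set.mem_univ b) h
    have hbp := blockPres f hf
    -- the image of a block fills its target block
    have hblock : ∀ x : T × Fin n, ∀ j : Fin n, ((f x).1, j) ∈ Y := by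
      intro x j
      have h1 : ∀ i : Fin n, (f (x.1, i)).1 = (f x).1 := fun i =>
        (hbp (x.1, i) x).mp rfl
      have hφinj : Function.Injective (fun i : Fin n => (f (x.1, i)).2) := by
        intro i i' h
        have : f (x.1, i) = f (x.1, i') := by
          apply Prod.ext
          · rw [h1 i, h1 i']
          · exact h
        have := finj this
        exact (Prod.mk.injEq _ _ _ _ ▸ this).2
      have hφsurj := Finite.surjective_of_injective hφinj
      obtain ⟨i, hi⟩ := hφsurj j
      have : f (x.1, i) = ((f x).1, j) := Prod.ext (h1 i) hi
      have hmem : f (x.1, i) ∈ Y := hbij.mapsTo (Set.mem_univ _)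
      rwa [this] at hmem
    -- Y is closed under blocks
    have hclosed : ∀ p ∈ Y, ∀ j : Fin n, (p.1, j) ∈ Y := by
      intro p hp j
      obtain ⟨x, -, hx⟩ := hbij.surjOn hp
      have := hblock x j
      rwa [hx] at this
    refine ⟨Prod.fst '' Y, ?_, ?_⟩
    · refine ⟨fun t => (f (t, z)).1, ⟨?_, ?_, ?_⟩, ?_⟩
      · intro t _
        exact ⟨f (t, z), hbij.mapsTo (Set.mem_univ _), rfl⟩
      · intro t _ t' _ h
        exact (hbp (t, z) (t', z)).mpr h
      · rintro a ⟨p, hp, rfl⟩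
        obtain ⟨x, -, hx⟩ := hbij.surjOn hp
        refine ⟨x.1, Set.mem_univ _, ?_⟩
        have h1 : (f (x.1, z)).1 = (f x).1 := (hbp (x.1, z) x).mp rfl
        show (f (x.1, z)).1 = p.1
        rw [h1, hx]
      · intro t t'
        exact hf (t, z) (t', z)
    · ext p
      constructor
      · intro hp; exact ⟨p, hp, rfl⟩
      · rintro ⟨q, hq, hq1⟩
        have := hclosed q hq p.2
        rw [hq1] at this
        simpa using this
  refine ⟨fun f _ hf => blockPres f hf, ?_, ?_⟩
  · ext Y
    constructor
    · intro hY; exact fwd Y hY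
    · rintro ⟨A, hA, rfl⟩; exact bwd A hA
  · refine ⟨{ toFun := fun A => ⟨{p | p.1 ∈ A.1}, bwd A.1 A.2⟩
              invFun := fun Y => ⟨Prod.fst '' Y.1, ?_⟩
              left_inv := ?_
              right_inv := ?_
              map_rel_iff' := ?_ }⟩
    · obtain ⟨A, hA, hYA⟩ := fwd Y.1 Y.2
      rw [hYA, img]; exact hA
    · intro A
      exact Subtype.ext (img A.1)
    · intro Y
      apply Subtype.ext
      obtain ⟨A, hA, hYA⟩ := fwd Y.1 Y.2
      show {p : T × Fin n | p.1 ∈ Prod.fst '' Y.1} = Y.1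
      rw [hYA, img]
    · intro A B
      constructor
      · intro h a ha
        have : ((a, z) : T × Fin n) ∈ {p : T × Fin n | p.1 ∈ A.1} := ha
        exact h this
      · intro h p hp
        exact h hp
end

section
/- Let T be a structure and let I_n[T] be the disjoint union of n copies of T (no relations across copies). Then the poset of copies P(I_n[T]) is isomorphic to the n-fold product P(T)^n, provided T is a connected tournament (so that embeddings of I_n[T] map each copy of T into a single copy). -/
/-- The disjoint union `I_n[T]` of `n` copies of `T`: arrows only within a
copy, following the relation of `T`; no relations across copies. -/
def DUArrow {T : Type*} (r : T → T → Prop) (n : ℕ) (x y : Fin n × T) : Prop :=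
  x.1 = y.1 ∧ r x.2 y.2

lemma fibers_isCopy {T : Type*} (r : T → T → Prop) (n : ℕ) [Nonempty T]
    (htot : ∀ x y, x ≠ y → r x y ∨ r y x)
    {Y : Set (Fin n × T)} (hY : IsCopy (DUArrow r n) Y) (j : Fin n) :
    IsCopy r {t | (j, t) ∈ Y} := by
  obtain ⟨f, hbij, hrel⟩ := hY
  obtain ⟨t0⟩ := ‹Nonempty T›
  -- first coordinate of f (i, ·) is constant
  have hA : ∀ i (x y : T), (f (i, x)).1 = (f (i, y)).1 := by
    intro i x y
    rcases eq_or_ne x y with h | h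
    · rw [h]
    · rcases htot x y h with hr | hr
      · exact ((hrel (i, x) (i, y)).mp ⟨rfl, hr⟩).1
      · exact (((hrel (i, y) (i, x)).mp ⟨rfl, hr⟩).1).symm
  set σ : Fin n → Fin n := fun i => (f (i, t0)).1 with hσ
  have hconst : ∀ i x, (f (i, x)).1 = σ i := fun i x => hA i x t0
  have hσinj : Function.Injective σ := by
    intro i j hij
    by_contra hne
    have hfne : f (i, t0) ≠ f (j, t0) := by
      intro h
      exact hne (congrArg Prod.fst (hbij.injOn (Set.mem_univ _) (Set.mem_univ _) h))
    have hsndne : (f (i, t0)).2 ≠ (f (j, t0)).2 := by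
      intro h
      exact hfne (Prod.ext hij h)
    rcases htot _ _ hsndne with hr | hr
    · exact hne ((hrel (i, t0) (j, t0)).mpr ⟨hij, hr⟩).1
    · exact hne (((hrel (j, t0) (i, t0)).mpr ⟨hij.symm, hr⟩).1).symm
  have hσbij : Function.Bijective σ := Finite.injective_iff_bijective.mp hσinj
  set e := Equiv.ofBijective σ hσbij with he
  set i := e.symm j with hi
  have hij : σ i = j := e.apply_symm_apply j
  refine ⟨fun x => (f (i, x)).2, ⟨?_, ?_, ?_⟩, ?_⟩
  · intro x _
    have hkey : f (i, x) = (j, (f (i, x)).2) := Prod.ext ((hconst i x).trans hij) rfl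
    have : f (i, x) ∈ Y := hbij.mapsTo (Set.mem_univ _)
    rwa [hkey] at this
  · intro x _ y _ h
    have : f (i, x) = f (i, y) :=
      Prod.ext (((hconst i x).trans (hconst i y).symm)) h
    exact congrArg Prod.snd (hbij.injOn (Set.mem_univ _) (Set.mem_univ _) this)
  · intro t ht
    obtain ⟨⟨i', x⟩, -, hfx⟩ := hbij.surjOn ht
    have h1 : σ i' = j := (hconst i' x).symm.trans (congrArg Prod.fst hfx)
    have h2 : i' = i := hσinj (h1.trans hij.symm)
    refine ⟨x, Set.mem_univ _, ?_⟩
    rw [← h2]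
    exact congrArg Prod.snd hfx
  · intro x y
    constructor
    · intro h
      exact ((hrel (i, x) (i, y)).mp ⟨rfl, h⟩).2
    · intro h
      exact ((hrel (i, x) (i, y)).mpr
        ⟨(hconst i x).trans (hconst i y).symm, h⟩).2

lemma union_isCopy {T : Type*} (r : T → T → Prop) (n : ℕ)
    {B : Fin n → Set T} (hB : ∀ j, IsCopy r (B j)) :
    IsCopy (DUArrow r n) {p : Fin n × T | p.2 ∈ B p.1} := by
  choose g hbij hrel using hB
  refine ⟨fun p => (p.1, g p.1 p.2), ⟨?_, ?_, ?_⟩, ?_⟩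
  · intro p _
    exact (hbij p.1).mapsTo (Set.mem_univ _)
  · rintro ⟨i, x⟩ - ⟨j, y⟩ - h
    obtain ⟨h1, h2⟩ := Prod.mk.injEq .. ▸ h
    subst h1
    exact Prod.ext rfl ((hbij i).injOn (Set.mem_univ _) (Set.mem_univ _) h2)
  · rintro ⟨j, t⟩ ht
    obtain ⟨x, -, hx⟩ := (hbij j).surjOn ht
    exact ⟨(j, x), Set.mem_univ _, Prod.ext rfl hx⟩
  · rintro ⟨i, x⟩ ⟨j, y⟩
    show (i = j ∧ r x y) ↔ (i = j ∧ r (g i x) (g j y))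
    constructor
    · rintro ⟨rfl, h⟩
      exact ⟨rfl, (hrel i x y).mp h⟩
    · rintro ⟨rfl, h⟩
      exact ⟨rfl, (hrel i x y).mpr h⟩

/-- for a connected (nonempty) tournament `T`, the poset of
copies of `I_n[T]` is order-isomorphic to the `n`-fold product `P(T)^n`. -/
theorem disjoint_union_copies
    {T : Type*} (r : T → T → Prop) (n : ℕ) [Nonempty T]
    (hirr : ∀ x, ¬ r x x)
    (hasym : ∀ x y, r x y → ¬ r y x)
    (htot : ∀ x y, x ≠ y → r x y ∨ r y x) :
    Nonempty ({Y : Set (Fin n × T) // IsCopy (DUArrow r n) Y} ≃o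
      (Fin n → {A : Set T // IsCopy r A})) := by
  refine ⟨⟨⟨fun Y j => ⟨{t | (j, t) ∈ Y.1}, fibers_isCopy r n htot Y.2 j⟩,
    fun B => ⟨{p | p.2 ∈ (B p.1).1}, union_isCopy r n fun j => (B j).2⟩,
    ?_, ?_⟩, ?_⟩⟩
  · intro Y
    apply Subtype.ext
    ext ⟨j, t⟩
    rfl
  · intro B
    funext j
    apply Subtype.ext
    rfl
  · intro Y Z
    constructor
    · intro h ⟨j, t⟩ ht
      exact h j ht
    · intro h j t ht
      exact h ht
end
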